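/- arXiv:1502.06152 — 2 statements merged into one kernel-verified Lean document; each statement's English description precedes it below -/
import Mathlib

section
/- Let F_q be a finite field with q elements, n ≥ 1, and s = s_0,…,s_{1-n} a nontrivial sequence over F_q with linear complexity L and e_s = n + 1 − 2L. Then for each d with L ≤ d ≤ n, the number of solutions (f_1, f_2) for s with deg f_1 = d is (q−1) q^{d−L} · (1 + Σ_{k=0}^{d−L−e_s} (q−1) q^k), where the sum is empty (so the factor is 1) if d − L − e_s < 0. -/
open Polynomial in
/-- φ of degree d satisfies the annihilating condition for the length-`n` sequence
`s₀, s₋₁, …, s₁₋ₙ` (where `s k` denotes `s₋ₖ`). -/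
def AnnCond {D : Type*} [CommRing D] (n : ℕ) (s : ℕ → D) (φ : Polynomial D) : Prop :=
  ∀ t : ℕ, t + φ.natDegree + 1 ≤ n →
    ∑ j ∈ Finset.range (φ.natDegree + 1), φ.coeff j * s (t + j) = 0

/-- φ is a nonzero annihilating polynomial of the length-`n` sequence `s`. -/
def Annihilates {D : Type*} [CommRing D] (n : ℕ) (s : ℕ → D) (φ : Polynomial D) : Prop :=
  φ ≠ 0 ∧ AnnCond n s φ

/-- Linear complexity: minimal degree of a nonzero annihilating polynomial. -/
noncomputable def LC {D : Type*} [CommRing D] (n : ℕ) (s : ℕ → D) : ℕ :=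
  sInf {d | ∃ φ : Polynomial D, Annihilates n s φ ∧ φ.natDegree = d}

/-- `x·ψ = [φ·s̄]`, the strictly-positive-degree part of `φ·s̄`, expressed coefficientwise. -/
def SeqNum {D : Type*} [CommRing D] (n : ℕ) (s : ℕ → D) (φ ψ : Polynomial D) : Prop :=
  ∀ k : ℕ, ψ.coeff k = ∑ j ∈ Finset.range (φ.natDegree + 1),
    if k + 1 ≤ j ∧ j - (k + 1) < n then φ.coeff j * s (j - (k + 1)) else 0

/-- `(φ, ψ)` is a solution for the length-`n` sequence `s`. -/
def IsSolution {D : Type*} [CommRing D] (n : ℕ) (s : ℕ → D) (φ ψ : Polynomial D) : Prop :=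
  Annihilates n s φ ∧ SeqNum n s φ ψ

section Aux
open Polynomial Finset
variable {F : Type*} [Field F]

/-- extend a `Fin m`-indexed vector by zero to all of `ℕ`. -/
def vext {m : ℕ} (v : Fin m → F) : ℕ → F := fun j => if h : j < m then v ⟨j, h⟩ else 0

/-- the polynomial with coefficient vector `v`. -/
noncomputable def polyOf {m : ℕ} (v : Fin m → F) : Polynomial F :=
  ∑ j ∈ Finset.range m, Polynomial.C (vext v j) * Polynomial.X ^ j

lemma coeff_polyOf {m : ℕ} (v : Fin m → F) (k : ℕ) : (polyOf v).coeff k = vext v k := by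
  rw [polyOf, Polynomial.finset_sum_coeff]
  simp only [Polynomial.coeff_C_mul, Polynomial.coeff_X_pow, mul_ite, mul_one, mul_zero]
  rw [Finset.sum_ite_eq (Finset.range m) k (vext v)]
  by_cases h : k < m
  · simp [Finset.mem_range, h]
  · simp [Finset.mem_range, h, vext]

lemma natDegree_lt_of_coeff_eq_zero {φ : Polynomial F} (hφ : φ ≠ 0) {B : ℕ}
    (h : ∀ k, B ≤ k → φ.coeff k = 0) : φ.natDegree < B := by
  by_contra h'
  push_neg at h'
  exact hφ (Polynomial.leadingCoeff_eq_zero.mp (h _ h'))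

lemma geom_aux (q : ℕ) (hq : 1 ≤ q) (m : ℕ) :
    1 + ∑ k ∈ Finset.range m, (q - 1) * q ^ k = q ^ m := by
  induction m with
  | zero => simp
  | succ m ih =>
    obtain ⟨qq, rfl⟩ : ∃ qq, q = qq + 1 := ⟨q - 1, by omega⟩
    rw [Finset.sum_range_succ, ← add_assoc, ih]
    have h1 : qq + 1 - 1 = qq := rfl
    rw [h1, pow_succ]
    ring

lemma exists_lc_poly (n : ℕ) (s : ℕ → F) :
    ∃ μ : Polynomial F, Annihilates n s μ ∧ μ.natDegree = LC n s := by
  have hmem : n ∈ {d | ∃ φ : Polynomial F, Annihilates n s φ ∧ φ.natDegree = d} := by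
    refine ⟨Polynomial.X ^ n, ⟨pow_ne_zero _ Polynomial.X_ne_zero, fun t ht => ?_⟩,
      Polynomial.natDegree_X_pow n⟩
    rw [Polynomial.natDegree_X_pow] at ht
    omega
  exact Nat.sInf_mem ⟨n, hmem⟩

lemma key_step (n : ℕ) (s : ℕ → F) (μ φ : Polynomial F) (L a : ℕ)
    (hμc : ∀ t, t + L + 1 ≤ n → ∑ i ∈ Finset.range (L + 1), μ.coeff i * s (t + i) = 0)
    (hμL : μ.coeff L ≠ 0)
    (t : ℕ) (htL : L ≤ t) (htn : t + a + 1 ≤ n)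
    (h : ∀ t' < t, ∑ j ∈ Finset.range (a + 1), φ.coeff j * s (t' + j) = 0) :
    ∑ j ∈ Finset.range (a + 1), φ.coeff j * s (t + j) = 0 := by
  obtain ⟨M, rfl⟩ : ∃ M, M + L = t := ⟨t - L, by omega⟩
  have T0 : ∑ j ∈ Finset.range (a + 1), ∑ i ∈ Finset.range (L + 1),
      φ.coeff j * (μ.coeff i * s (M + j + i)) = 0 := by
    refine Finset.sum_eq_zero fun j hj => ?_
    rw [← Finset.mul_sum, hμc (M + j) (by simp only [Finset.mem_range] at hj; omega), mul_zero]
  rw [Finset.sum_comm, Finset.sum_range_succ] at T0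
  have e1 : ∑ i ∈ Finset.range L, ∑ j ∈ Finset.range (a + 1),
      φ.coeff j * (μ.coeff i * s (M + j + i)) = 0 := by
    refine Finset.sum_eq_zero fun i hi => ?_
    have hi' : i < L := Finset.mem_range.mp hi
    have e : ∑ j ∈ Finset.range (a + 1), φ.coeff j * (μ.coeff i * s (M + j + i))
        = μ.coeff i * ∑ j ∈ Finset.range (a + 1), φ.coeff j * s (M + i + j) := by
      rw [Finset.mul_sum]
      refine Finset.sum_congr rfl fun j _ => ?_
      have hidx : M + j + i = M + i + j := by omega
      rw [hidx]; ring
    rw [e, h (M + i) (by omega), mul_zero]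
  rw [e1, zero_add] at T0
  have e2 : ∑ j ∈ Finset.range (a + 1), φ.coeff j * (μ.coeff L * s (M + j + L))
      = μ.coeff L * ∑ j ∈ Finset.range (a + 1), φ.coeff j * s (M + L + j) := by
    rw [Finset.mul_sum]
    refine Finset.sum_congr rfl fun j _ => ?_
    have hidx : M + j + L = M + L + j := by omega
    rw [hidx]; ring
  rw [e2] at T0
  exact (mul_eq_zero.mp T0).resolve_left hμL

lemma key_zero (n : ℕ) (s : ℕ → F) (μ : Polynomial F)
    (hμ : Annihilates n s μ) (hL : μ.natDegree = LC n s)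
    (φ : Polynomial F) (hφd : φ.natDegree < LC n s)
    (A T : ℕ) (hA : φ.natDegree < A) (hT : LC n s ≤ T)
    (hbase : ∀ t < T, ∑ j ∈ Finset.range A, φ.coeff j * s (t + j) = 0) : φ = 0 := by
  by_contra hφ0
  have hred : ∀ t, ∑ j ∈ Finset.range (φ.natDegree + 1), φ.coeff j * s (t + j)
      = ∑ j ∈ Finset.range A, φ.coeff j * s (t + j) := by
    intro t
    refine Finset.sum_subset (by intro x hx; simp only [Finset.mem_range] at *; omega) ?_
    intro j hj hj'
    simp only [Finset.mem_range] at hj hj'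
    rw [Polynomial.coeff_eq_zero_of_natDegree_lt (by omega), zero_mul]
  have hall : ∀ t, t + φ.natDegree + 1 ≤ n →
      ∑ j ∈ Finset.range (φ.natDegree + 1), φ.coeff j * s (t + j) = 0 := by
    intro t
    induction t using Nat.strong_induction_on with
    | _ t ih =>
      intro htn
      by_cases htT : t < T
      · rw [hred]; exact hbase t htT
      · refine key_step n s μ φ μ.natDegree φ.natDegree (fun t' ht' => hμ.2 t' ht') ?_ t
          (by omega) htn (fun t' ht' => ih t' ht' (by omega))
        exact fun hc => hμ.1 (Polynomial.leadingCoeff_eq_zero.mp hc)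
  have hAnn : Annihilates n s φ := ⟨hφ0, hall⟩
  have : LC n s ≤ φ.natDegree := Nat.sInf_le ⟨φ, hAnn, rfl⟩
  omega

end Aux

section VecCount
open Polynomial Finset Module Matrix
variable {F : Type*} [Field F] [Fintype F] [DecidableEq F]

lemma vec_count (n : ℕ) (s : ℕ → F) (d : ℕ) (hLd : LC n s ≤ d) (hdn : d ≤ n) :
    Nat.card {v : Fin (d + 1) → F //
        (∀ t, t < n - d → ∑ j ∈ Finset.range (d + 1), vext v j * s (t + j) = 0) ∧
          vext v d ≠ 0} =
      (Fintype.card F - 1) * Fintype.card F ^ (d - LC n s) *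
        (1 + ∑ k ∈ Finset.range (d + LC n s - n),
          (Fintype.card F - 1) * Fintype.card F ^ k) := by
  classical
  set q := Fintype.card F with hq
  set L := LC n s with hLdef
  obtain ⟨μ, hμ, hμdeg⟩ := exists_lc_poly n s
  have hμL : μ.coeff L ≠ 0 := by
    rw [hLdef, ← hμdeg]
    exact fun hc => hμ.1 (Polynomial.leadingCoeff_eq_zero.mp hc)
  have hμcoeff : ∀ i, L < i → μ.coeff i = 0 := fun i hi =>
    Polynomial.coeff_eq_zero_of_natDegree_lt (by omega)
  set r := n - d with hr
  set M : Matrix (Fin r) (Fin (d + 1)) F :=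
    Matrix.of (fun t j => s ((t : ℕ) + (j : ℕ))) with hM
  set K : Submodule F (Fin (d + 1) → F) := LinearMap.ker M.mulVecLin with hK
  have hMV : ∀ (v : Fin (d + 1) → F) (t : Fin r),
      M.mulVecLin v t = ∑ j ∈ Finset.range (d + 1), vext v j * s ((t : ℕ) + j) := by
    intro v t
    simp only [Matrix.mulVecLin_apply, Matrix.mulVec, dotProduct, hM, Matrix.of_apply]
    rw [← Fin.sum_univ_eq_sum_range (fun j => vext v j * s ((t : ℕ) + j)) (d + 1)]
    refine Finset.sum_congr rfl fun j _ => ?_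
    simp [vext, j.isLt, mul_comm]
  have hKmem : ∀ v : Fin (d + 1) → F, v ∈ K ↔
      ∀ t, t < r → ∑ j ∈ Finset.range (d + 1), vext v j * s (t + j) = 0 := by
    intro v
    rw [hK, LinearMap.mem_ker]
    constructor
    · intro h t ht
      have h1 := congrFun h ⟨t, ht⟩
      rw [hMV] at h1
      simpa using h1
    · intro h
      funext t
      rw [hMV]
      simpa using h t t.isLt
  -- the shifted family
  set vfam : Fin (d + 1 - L) → (Fin (d + 1) → F) :=
    fun i j => if (i : ℕ) ≤ (j : ℕ) then μ.coeff ((j : ℕ) - (i : ℕ)) else 0 with hvfam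
  have hvext : ∀ (i : Fin (d + 1 - L)) (j : ℕ), vext (vfam i) j
      = if (i : ℕ) ≤ j ∧ j < d + 1 then μ.coeff (j - (i : ℕ)) else 0 := by
    intro i j
    by_cases hjd : j < d + 1
    · simp only [vext, dif_pos hjd, hvfam]
      by_cases hij : (i : ℕ) ≤ j
      · rw [if_pos hij, if_pos ⟨hij, hjd⟩]
      · rw [if_neg hij, if_neg (fun hc => hij hc.1)]
    · simp only [vext, dif_neg hjd]
      rw [if_neg (fun hc => hjd hc.2)]
  have hvmem : ∀ i : Fin (d + 1 - L), vfam i ∈ K := by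
    intro i
    have hiL : (i : ℕ) ≤ d - L := by have := i.isLt; omega
    rw [hKmem]
    intro t ht
    have e0 : ∑ j ∈ Finset.range (d + 1), vext (vfam i) j * s (t + j)
        = ∑ j ∈ Finset.Ico (i : ℕ) (d + 1), vext (vfam i) j * s (t + j) := by
      refine (Finset.sum_subset (fun x hx => ?_) (fun j hj hj' => ?_)).symm
      · simp only [Finset.mem_Ico] at hx; simp only [Finset.mem_range]; omega
      · simp only [Finset.mem_range] at hj
        simp only [Finset.mem_Ico, not_and, not_lt] at hj'
        rw [hvext, if_neg (by omega), zero_mul]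
    rw [e0, Finset.sum_Ico_eq_sum_range]
    have e1 : ∑ j ∈ Finset.range (d + 1 - (i : ℕ)), vext (vfam i) ((i : ℕ) + j) * s (t + ((i : ℕ) + j))
        = ∑ j ∈ Finset.range (d + 1 - (i : ℕ)), μ.coeff j * s ((t + (i : ℕ)) + j) := by
      refine Finset.sum_congr rfl fun j hj => ?_
      simp only [Finset.mem_range] at hj
      rw [hvext, if_pos (by omega)]
      have h2 : (i : ℕ) + j - (i : ℕ) = j := by omega
      have h3 : t + ((i : ℕ) + j) = (t + (i : ℕ)) + j := by omega
      rw [h2, h3]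
    rw [e1]
    have e2 : ∑ j ∈ Finset.range (d + 1 - (i : ℕ)), μ.coeff j * s ((t + (i : ℕ)) + j)
        = ∑ j ∈ Finset.range (L + 1), μ.coeff j * s ((t + (i : ℕ)) + j) := by
      refine (Finset.sum_subset (fun x hx => ?_) (fun j hj hj' => ?_)).symm
      · simp only [Finset.mem_range] at *; omega
      · simp only [Finset.mem_range] at hj hj'
        rw [hμcoeff j (by omega), zero_mul]
    rw [e2]
    have hfin := hμ.2 (t + (i : ℕ)) (show t + (i : ℕ) + μ.natDegree + 1 ≤ n by rw [hμdeg]; omega)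
    rw [hμdeg] at hfin
    exact hfin
  have hind : LinearIndependent F vfam := by
    rw [Fintype.linearIndependent_iff]
    intro g hg
    have H : ∀ k : ℕ, ∀ i : Fin (d + 1 - L), (i : ℕ) = d - L - k → g i = 0 := by
      intro k
      induction k using Nat.strong_induction_on with
      | _ k ih =>
        intro i hi
        have hiL : (i : ℕ) ≤ d - L := by have := i.isLt; omega
        have hlt : L + (i : ℕ) < d + 1 := by omega
        have h0 := congrFun hg (⟨L + (i : ℕ), hlt⟩ : Fin (d + 1))
        simp only [Finset.sum_apply, Pi.smul_apply, smul_eq_mul, Pi.zero_apply] at h0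
        have hsingle : ∑ b : Fin (d + 1 - L), g b * vfam b ⟨L + (i : ℕ), hlt⟩
            = g i * vfam i ⟨L + (i : ℕ), hlt⟩ := by
          refine Finset.sum_eq_single i (fun b _ hbi => ?_)
            (fun hi' => absurd (Finset.mem_univ i) hi')
          rcases lt_or_gt_of_ne (fun hc => hbi (Fin.ext hc) : (b : ℕ) ≠ (i : ℕ)) with hb | hb
          · have hz : vfam b ⟨L + (i : ℕ), hlt⟩ = 0 := by
              show (if (b : ℕ) ≤ L + (i : ℕ) then μ.coeff (L + (i : ℕ) - (b : ℕ)) else 0) = 0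
              rw [if_pos (by omega)]
              exact hμcoeff _ (by omega)
            rw [hz, mul_zero]
          · have hb0 : g b = 0 :=
              ih (d - L - (b : ℕ)) (by omega) b (by have := b.isLt; omega)
            rw [hb0, zero_mul]
        rw [hsingle] at h0
        have hvii : vfam i ⟨L + (i : ℕ), hlt⟩ = μ.coeff L := by
          show (if (i : ℕ) ≤ L + (i : ℕ) then μ.coeff (L + (i : ℕ) - (i : ℕ)) else 0) = μ.coeff L
          rw [if_pos (by omega), Nat.add_sub_cancel]
        rw [hvii] at h0
        exact (mul_eq_zero.mp h0).resolve_right hμL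
    exact fun i => H (d - L - (i : ℕ)) i (by have := i.isLt; omega)
  -- dimensions
  have htot : Module.finrank F (Fin (d + 1) → F) = d + 1 := by
    rw [Module.finrank_fintype_fun_eq_card, Fintype.card_fin]
  set k := Module.finrank F K with hkdef
  have hrn : M.rank + k = d + 1 := by
    have h1 := LinearMap.finrank_range_add_finrank_ker M.mulVecLin
    rw [htot] at h1
    exact h1
  have hk2 : d + 1 - L ≤ k := by
    have hindK : LinearIndependent F (fun i => (⟨vfam i, hvmem i⟩ : K)) :=
      LinearIndependent.of_comp K.subtype
        (show LinearIndependent F (K.subtype ∘ fun i => (⟨vfam i, hvmem i⟩ : K)) from hind)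
    have hcard := hindK.fintype_card_le_finrank
    simpa using hcard
  have hkval : k = d + 1 - min L r := by
    rcases le_or_gt L r with hcase | hcase
    · rw [min_eq_left hcase]
      -- upper bound via the coordinate subspace
      set E : (Fin L → F) →ₗ[F] (Fin (d + 1) → F) :=
        { toFun := fun c j => if h : (j : ℕ) < L then c ⟨(j : ℕ), h⟩ else 0
          map_add' := fun x y => by
            funext j; by_cases h : (j : ℕ) < L <;> simp [h]
          map_smul' := fun m x => by
            funext j; by_cases h : (j : ℕ) < L <;> simp [h] } with hE
      have hEapp : ∀ (c : Fin L → F) (j : Fin (d + 1)),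
          E c j = if h : (j : ℕ) < L then c ⟨(j : ℕ), h⟩ else 0 := fun c j => rfl
      have hEinj : Function.Injective E := by
        intro a b hab
        funext i
        have hi : (i : ℕ) < L := i.isLt
        have h2 := congrFun hab (⟨(i : ℕ), by omega⟩ : Fin (d + 1))
        rw [hEapp, hEapp, dif_pos hi, dif_pos hi] at h2
        simpa using h2
      have hWrank : Module.finrank F (LinearMap.range E) = L := by
        have h1 := LinearMap.finrank_range_add_finrank_ker E
        rw [LinearMap.ker_eq_bot.mpr hEinj, finrank_bot,
          Module.finrank_fintype_fun_eq_card, Fintype.card_fin] at h1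
        omega
      have hKW : K ⊓ LinearMap.range E = ⊥ := by
        rw [Submodule.eq_bot_iff]
        rintro v ⟨hvK, c, rfl⟩
        by_contra hvne
        have hcoeff : ∀ kk, (polyOf (E c)).coeff kk = vext (E c) kk := coeff_polyOf _
        have hφne : polyOf (E c) ≠ 0 := by
          intro h0
          refine hvne (funext fun j => ?_)
          have h1 := congrArg (fun p => Polynomial.coeff p (j : ℕ)) h0
          simp only [hcoeff, Polynomial.coeff_zero] at h1
          rw [vext, dif_pos j.isLt] at h1
          simpa using h1
        have hφdeg : (polyOf (E c)).natDegree < L := by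
          refine natDegree_lt_of_coeff_eq_zero hφne (fun kk hk => ?_)
          rw [hcoeff, vext]
          split
          · rw [hEapp]
            exact dif_neg (by omega : ¬ (kk < L))
          · rfl
        have hbase : ∀ t < r, ∑ j ∈ Finset.range (d + 1),
            (polyOf (E c)).coeff j * s (t + j) = 0 := by
          intro t ht
          have h1 := (hKmem (E c)).mp hvK t ht
          rw [← h1]
          exact Finset.sum_congr rfl fun j _ => by rw [hcoeff]
        have hzero := key_zero n s μ hμ hμdeg (polyOf (E c)) (by omega) (d + 1) r
          (by omega) (by omega) hbase
        exact hφne hzero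
      have hsum := Submodule.finrank_sup_add_finrank_inf_eq K (LinearMap.range E)
      rw [hKW, finrank_bot, hWrank, ← hkdef] at hsum
      have hle := Submodule.finrank_le (K ⊔ LinearMap.range E)
      rw [htot] at hle
      omega
    · rw [min_eq_right (le_of_lt hcase)]
      have hkerT : LinearMap.ker (Mᵀ.mulVecLin) = ⊥ := by
        rw [Submodule.eq_bot_iff]
        intro u hu
        by_contra hune
        have hcoeff : ∀ kk, (polyOf u).coeff kk = vext u kk := coeff_polyOf _
        have hψne : polyOf u ≠ 0 := by
          intro h0
          refine hune (funext fun t => ?_)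
          have h1 := congrArg (fun p => Polynomial.coeff p (t : ℕ)) h0
          simp only [hcoeff, Polynomial.coeff_zero] at h1
          rw [vext, dif_pos t.isLt] at h1
          simpa using h1
        have hψdeg : (polyOf u).natDegree < r := by
          refine natDegree_lt_of_coeff_eq_zero hψne (fun kk hk => ?_)
          rw [hcoeff, vext, dif_neg (by omega)]
        have hbase : ∀ t' < d + 1, ∑ j ∈ Finset.range r,
            (polyOf u).coeff j * s (t' + j) = 0 := by
          intro t' ht'
          have h1 := congrFun (LinearMap.mem_ker.mp hu) ⟨t', ht'⟩
          simp only [Matrix.mulVecLin_apply, Matrix.mulVec, dotProduct,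
            Matrix.transpose_apply, hM, Matrix.of_apply, Pi.zero_apply] at h1
          rw [← h1, ← Fin.sum_univ_eq_sum_range (fun j => (polyOf u).coeff j * s (t' + j)) r]
          refine Finset.sum_congr rfl fun t _ => ?_
          rw [hcoeff, vext, dif_pos t.isLt]
          have hidx : t' + (t : ℕ) = (t : ℕ) + t' := by omega
          rw [hidx, mul_comm]
        have hzero := key_zero n s μ hμ hμdeg (polyOf u) (by omega) r (d + 1)
          hψdeg (by omega) hbase
        exact hψne hzero
      have hrT : Mᵀ.rank = r := by
        have h1 := LinearMap.finrank_range_add_finrank_ker Mᵀ.mulVecLin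
        rw [hkerT, finrank_bot, Module.finrank_fintype_fun_eq_card, Fintype.card_fin] at h1
        simpa [Matrix.rank] using h1
      have hrM : M.rank = r := by rw [← Matrix.rank_transpose]; exact hrT
      omega
  -- the distinguished element with nonzero top coordinate
  have hdIdx : (d : ℕ) < d + 1 := by omega
  have hdLlt : d - L < d + 1 - L := by omega
  have hwK : vfam ⟨d - L, hdLlt⟩ ∈ K := hvmem _
  have hwd : vfam ⟨d - L, hdLlt⟩ ⟨d, hdIdx⟩ ≠ 0 := by
    show (if (d - L : ℕ) ≤ d then μ.coeff (d - (d - L)) else 0) ≠ 0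
    rw [if_pos (by omega)]
    have he : d - (d - L) = L := by omega
    rw [he]
    exact hμL
  set ℓ : K →ₗ[F] F := (LinearMap.proj (⟨d, hdIdx⟩ : Fin (d + 1))).comp K.subtype with hℓ
  have hℓapply : ∀ x : K, ℓ x = (x : Fin (d + 1) → F) ⟨d, hdIdx⟩ := fun x => rfl
  have hℓsurj : LinearMap.range ℓ = ⊤ := by
    rw [LinearMap.range_eq_top]
    intro y
    refine ⟨(y * (vfam ⟨d - L, hdLlt⟩ ⟨d, hdIdx⟩)⁻¹) • ⟨vfam ⟨d - L, hdLlt⟩, hwK⟩, ?_⟩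
    rw [LinearMap.map_smul, hℓapply, smul_eq_mul]
    show (y * (vfam ⟨d - L, hdLlt⟩ ⟨d, hdIdx⟩)⁻¹) * (vfam ⟨d - L, hdLlt⟩ ⟨d, hdIdx⟩) = y
    rw [mul_assoc, inv_mul_cancel₀ hwd, mul_one]
  have hkerℓ : Module.finrank F (LinearMap.ker ℓ) + 1 = k := by
    have h1 := LinearMap.finrank_range_add_finrank_ker ℓ
    rw [hℓsurj, finrank_top, Module.finrank_self] at h1
    omega
  have hKcard : Fintype.card K = q ^ k := card_eq_pow_finrank (K := F) (V := K)
  have hkercard : Fintype.card (LinearMap.ker ℓ) = q ^ (k - 1) := by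
    rw [card_eq_pow_finrank (K := F) (V := LinearMap.ker ℓ)]
    congr 1
    omega
  have hvextd : ∀ v : Fin (d + 1) → F, vext v d = v ⟨d, hdIdx⟩ := fun v => dif_pos hdIdx
  have hcount : Nat.card {v : Fin (d + 1) → F //
      (∀ t, t < r → ∑ j ∈ Finset.range (d + 1), vext v j * s (t + j) = 0) ∧
        vext v d ≠ 0} = q ^ k - q ^ (k - 1) := by
    have e1 : {v : Fin (d + 1) → F //
        (∀ t, t < r → ∑ j ∈ Finset.range (d + 1), vext v j * s (t + j) = 0) ∧
          vext v d ≠ 0} ≃ {x : K // ¬ (ℓ x = 0)} :=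
      { toFun := fun v => ⟨⟨v.1, (hKmem v.1).mpr v.2.1⟩,
          fun h => v.2.2 (by rw [hvextd]; rw [hℓapply] at h; exact h)⟩
        invFun := fun x => ⟨x.1.1, ⟨(hKmem x.1.1).mp x.1.2,
          by rw [hvextd]; exact fun h => x.2 (by rw [hℓapply]; exact h)⟩⟩
        left_inv := fun v => Subtype.ext rfl
        right_inv := fun x => Subtype.ext (Subtype.ext rfl) }
    rw [Nat.card_congr e1, Nat.card_eq_fintype_card, Fintype.card_subtype_compl, hKcard]
    have e2 : {x : K // ℓ x = 0} ≃ LinearMap.ker ℓ :=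
      Equiv.subtypeEquivRight (fun x => (LinearMap.mem_ker).symm)
    rw [Fintype.card_congr e2, hkercard]
  rw [hcount, geom_aux q Fintype.card_pos (d + L - n), mul_assoc, ← pow_add]
  have hkm : (d - L) + (d + L - n) = k - 1 := by omega
  rw [hkm]
  have hk1 : 1 ≤ k := by omega
  have hqk : q ^ k = q * q ^ (k - 1) := by
    conv_lhs => rw [show k = (k - 1) + 1 by omega]
    rw [pow_succ, mul_comm]
  rw [hqk, Nat.sub_mul, one_mul]

end VecCount

section Bridge
open Polynomial Finset
variable {F : Type*} [Field F]

lemma coeff_sum_C_mul_X_pow (f : ℕ → F) (m k : ℕ) :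
    (∑ j ∈ Finset.range m, Polynomial.C (f j) * Polynomial.X ^ j).coeff k
      = if k < m then f k else 0 := by
  rw [Polynomial.finset_sum_coeff]
  simp only [Polynomial.coeff_C_mul, Polynomial.coeff_X_pow, mul_ite, mul_one, mul_zero]
  rw [Finset.sum_ite_eq (Finset.range m) k f]
  simp [Finset.mem_range]

/-- the canonical numerator polynomial associated with a coefficient vector. -/
noncomputable def psiOf (n d : ℕ) (s : ℕ → F) (v : Fin (d + 1) → F) : Polynomial F :=
  ∑ kk ∈ Finset.range d, Polynomial.C (∑ j ∈ Finset.range (d + 1),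
    if kk + 1 ≤ j ∧ j - (kk + 1) < n then (polyOf v).coeff j * s (j - (kk + 1)) else 0) *
      Polynomial.X ^ kk

lemma seqNum_psiOf (n d : ℕ) (s : ℕ → F) (v : Fin (d + 1) → F)
    (hdeg : (polyOf v).natDegree = d) : SeqNum n s (polyOf v) (psiOf n d s v) := by
  intro k
  rw [hdeg, psiOf, coeff_sum_C_mul_X_pow]
  by_cases hk : k < d
  · rw [if_pos hk]
  · rw [if_neg hk]
    symm
    refine Finset.sum_eq_zero fun j hj => if_neg ?_
    simp only [Finset.mem_range] at hj
    rintro ⟨h1, _⟩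
    omega

lemma seqNum_unique (n : ℕ) (s : ℕ → F) (φ ψ₁ ψ₂ : Polynomial F)
    (h1 : SeqNum n s φ ψ₁) (h2 : SeqNum n s φ ψ₂) : ψ₁ = ψ₂ :=
  Polynomial.ext fun k => by rw [h1 k, h2 k]

end Bridge

/-- Counting solutions over a finite field: for `L ≤ d ≤ n`, the number of solutions
`(f₁,f₂)` for a nontrivial `s` with `deg f₁ = d` is
`(q−1) q^{d−L} (1 + Σ_{k=0}^{d−L−e_s} (q−1) q^k)` where `q = |F|`, `L = LC_n`,
`e_s = n+1−2L` (the sum being empty when `d−L−e_s < 0`, i.e. `d + L ≤ n`). -/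
theorem count_solutions {F : Type*} [Field F] [Fintype F] [DecidableEq F]
    (n : ℕ) (hn : 1 ≤ n) (s : ℕ → F) (hnt : ∃ k < n, s k ≠ 0)
    (d : ℕ) (hLd : LC n s ≤ d) (hdn : d ≤ n) :
    Nat.card {p : Polynomial F × Polynomial F //
        IsSolution n s p.1 p.2 ∧ p.1.natDegree = d} =
      (Fintype.card F - 1) * Fintype.card F ^ (d - LC n s) *
        (1 + ∑ k ∈ Finset.range (d + LC n s - n),
          (Fintype.card F - 1) * Fintype.card F ^ k) := by
  classical
  have hdn1 : d < d + 1 := Nat.lt_succ_self d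
  have key : ∀ v : Fin (d + 1) → F, vext v d ≠ 0 → (polyOf v).natDegree = d := by
    intro v hv
    have hne : polyOf v ≠ 0 :=
      fun h => hv (by rw [← coeff_polyOf v d, h, Polynomial.coeff_zero])
    refine le_antisymm ?_
      (Polynomial.le_natDegree_of_ne_zero (by rw [coeff_polyOf]; exact hv))
    have h1 := natDegree_lt_of_coeff_eq_zero hne (B := d + 1)
      (fun kk hk => by rw [coeff_polyOf, vext, dif_neg (by omega)])
    omega
  have hsumv : ∀ (f1 : Polynomial F) (t : ℕ),
      ∑ j ∈ Finset.range (d + 1), vext (fun j : Fin (d + 1) => f1.coeff (j : ℕ)) j * s (t + j)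
        = ∑ j ∈ Finset.range (d + 1), f1.coeff j * s (t + j) := by
    intro f1 t
    refine Finset.sum_congr rfl fun j hj => ?_
    rw [vext, dif_pos (Finset.mem_range.mp hj)]
  have topne : ∀ x : {p : Polynomial F × Polynomial F //
      IsSolution n s p.1 p.2 ∧ p.1.natDegree = d}, (x : Polynomial F × Polynomial F).1.coeff d ≠ 0 := by
    intro x hc
    exact x.2.1.1.1 (Polynomial.leadingCoeff_eq_zero.mp
      (by rw [Polynomial.leadingCoeff, x.2.2]; exact hc))
  have main : {p : Polynomial F × Polynomial F //
        IsSolution n s p.1 p.2 ∧ p.1.natDegree = d}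
      ≃ {v : Fin (d + 1) → F //
        (∀ t, t < n - d → ∑ j ∈ Finset.range (d + 1), vext v j * s (t + j) = 0) ∧
          vext v d ≠ 0} := by
    refine
      { toFun := fun x => ⟨fun j => x.1.1.coeff (j : ℕ), ?_, ?_⟩
        invFun := fun y => ⟨(polyOf y.1, psiOf n d s y.1), ⟨⟨?_, ?_⟩, ?_⟩, key y.1 y.2.2⟩
        left_inv := ?_
        right_inv := ?_ }
    · -- forward: kernel conditions
      intro t ht
      rw [hsumv]
      have h1 := x.2.1.1.2 t (by rw [x.2.2]; omega)
      rw [x.2.2] at h1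
      exact h1
    · -- forward: top coefficient nonzero
      rw [vext, dif_pos hdn1]
      show x.1.1.coeff d ≠ 0
      exact topne x
    · -- backward: nonzero
      show polyOf (y.1 : Fin (d + 1) → F) ≠ 0
      exact fun h => y.2.2 (by rw [← coeff_polyOf y.1 d, h, Polynomial.coeff_zero])
    · -- backward: annihilating condition
      show AnnCond n s (polyOf (y.1 : Fin (d + 1) → F))
      intro t ht
      rw [key y.1 y.2.2] at ht ⊢
      have h1 := y.2.1 t (by omega)
      exact Eq.trans (Finset.sum_congr rfl fun j hj => by rw [coeff_polyOf]) h1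
    · -- backward: SeqNum
      exact seqNum_psiOf n d s y.1 (key y.1 y.2.2)
    · -- left inverse
      intro x
      have hvd : vext (fun j : Fin (d + 1) => x.1.1.coeff (j : ℕ)) d ≠ 0 := by
        rw [vext, dif_pos hdn1]
        show x.1.1.coeff d ≠ 0
        exact topne x
      have h1 : polyOf (fun j : Fin (d + 1) => x.1.1.coeff (j : ℕ)) = x.1.1 := by
        refine Polynomial.ext fun kk => ?_
        rw [coeff_polyOf, vext]
        split
        · rfl
        · symm
          refine Polynomial.coeff_eq_zero_of_natDegree_lt ?_
          rw [x.2.2]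
          omega
      have h2 : psiOf n d s (fun j : Fin (d + 1) => x.1.1.coeff (j : ℕ)) = x.1.2 := by
        have hs1 := seqNum_psiOf n d s (fun j : Fin (d + 1) => x.1.1.coeff (j : ℕ))
          (key _ hvd)
        rw [h1] at hs1
        exact seqNum_unique n s x.1.1 _ _ hs1 x.2.1.2
      exact Subtype.ext (Prod.ext h1 h2)
    · -- right inverse
      intro y
      refine Subtype.ext (funext fun j => ?_)
      show (polyOf (y.1 : Fin (d + 1) → F)).coeff (j : ℕ) = y.1 j
      rw [coeff_polyOf, vext, dif_pos j.isLt]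
  exact (Nat.card_congr main).trans (vec_count n s d hLd hdn)
end

section
/- Let D be a commutative domain, n ≥ 1, s = s_0,…,s_{1-n} a nontrivial sequence over D, a ∈ D, and (μ, μ') the output pair of the minimal-solution algorithm with L = LC_n = deg μ_1 and μ_2 μ'_1 − μ_1 μ'_2 = ∇_s ≠ 0. Suppose μ_1(a) = 0. Let e = n + 1 − 2L and M = max{e, 0}. Then the minimum degree LC^{(a)} of an annihilating polynomial of s not vanishing at a equals L + M; moreover ξ_1 = x^M μ_1 − μ'_1 is an annihilating polynomial of s of degree L + M with ξ_1(a) ≠ 0, and (ξ_1, x^M μ_2 − μ'_2) is a solution for s. -/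
/-- Discrepancy `Δ(φ; s₀,…,s₋ₖ)` of `φ` with respect to the length-`(k+1)` prefix:
the coefficient `(φ·t̄)_{deg φ − k}`. -/
noncomputable def disc {D : Type*} [CommRing D] (s : ℕ → D) (k : ℕ) (φ : Polynomial D) : D :=
  ∑ j ∈ Finset.range (φ.natDegree + 1),
    if φ.natDegree ≤ j + k then φ.coeff j * s (j + k - φ.natDegree) else 0
/-- State of the Berlekamp–Massey-type algorithm (Algorithm 4.1):
current minimal solution `μ`, auxiliary previous solution `μ'`,
previous nonzero discrepancy `Δ'₁`, the integer `e`, and the product `∇` of discrepancies. -/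
structure BMState (D : Type*) [CommRing D] where
  mu : Polynomial D × Polynomial D
  mu' : Polynomial D × Polynomial D
  dp : D
  e : ℤ
  nabla : D

open Polynomial in
/-- One iteration of the algorithm, processing the term `s₋ₖ`. -/
noncomputable def bmStep {D : Type*} [CommRing D] [DecidableEq D]
    (s : ℕ → D) (k : ℕ) (st : BMState D) : BMState D :=
  let Δ := disc s k st.mu.1
  if Δ = 0 then { st with e := st.e + 1 }
  else if st.e ≤ 0 then
    { st with
      mu := (C st.dp * st.mu.1 - C Δ * X ^ (-st.e).toNat * st.mu'.1,
             C st.dp * st.mu.2 - C Δ * X ^ (-st.e).toNat * st.mu'.2),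
      nabla := st.dp * st.nabla,
      e := st.e + 1 }
  else
    { mu := (C st.dp * X ^ st.e.toNat * st.mu.1 - C Δ * st.mu'.1,
             C st.dp * X ^ st.e.toNat * st.mu.2 - C Δ * st.mu'.2),
      mu' := st.mu,
      dp := Δ,
      nabla := Δ * st.nabla,
      e := -st.e + 1 }

/-- Running the algorithm on the first `n` terms `s₀, …, s₁₋ₙ`
starting from `μ = (1,0)`, `μ' = (0,−1)`, `Δ'₁ = 1`, `e = 1`, `∇ = 1`. -/
noncomputable def bmRun {D : Type*} [CommRing D] [DecidableEq D] (s : ℕ → D) : ℕ → BMState D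
  | 0 => ⟨(1, 0), (0, -1), 1, 1, 1⟩
  | (k + 1) => bmStep s k (bmRun s k)

section BMAux
open Polynomial Finset
variable {D : Type*} [CommRing D]

/-- annihilation sum with explicit range -/
def Asum (s : ℕ → D) (φ : Polynomial D) (N t : ℕ) : D :=
  ∑ j ∈ Finset.range N, φ.coeff j * s (t + j)

lemma annCond_iff_asum {n : ℕ} {s : ℕ → D} {φ : Polynomial D} :
    AnnCond n s φ ↔ ∀ t, t + φ.natDegree + 1 ≤ n → Asum s φ (φ.natDegree + 1) t = 0 :=
  Iff.rfl

lemma Asum_ext (s : ℕ → D) (φ : Polynomial D) {N N' : ℕ} (t : ℕ)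
    (h : φ.natDegree < N) (h' : N ≤ N') : Asum s φ N' t = Asum s φ N t := by
  unfold Asum
  refine (Finset.sum_subset (Finset.range_subset_range.2 h') ?_).symm
  intro j _ hj
  rw [Finset.mem_range, not_lt] at hj
  rw [φ.coeff_eq_zero_of_natDegree_lt (lt_of_lt_of_le h hj), zero_mul]

lemma annCond_asum {n : ℕ} {s : ℕ → D} {φ : Polynomial D} (h : AnnCond n s φ) {t : ℕ}
    (ht : t + φ.natDegree + 1 ≤ n) : Asum s φ (φ.natDegree + 1) t = 0 := h t ht

lemma Asum_sub (s : ℕ → D) (φ φ' : Polynomial D) (N t : ℕ) :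
    Asum s (φ - φ') N t = Asum s φ N t - Asum s φ' N t := by
  unfold Asum
  rw [← Finset.sum_sub_distrib]
  exact Finset.sum_congr rfl fun j _ => by rw [coeff_sub, sub_mul]

lemma Asum_C_mul (s : ℕ → D) (a : D) (φ : Polynomial D) (N t : ℕ) :
    Asum s (C a * φ) N t = a * Asum s φ N t := by
  unfold Asum
  rw [Finset.mul_sum]
  exact Finset.sum_congr rfl fun j _ => by rw [coeff_C_mul, mul_assoc]

lemma Asum_X_pow_mul (s : ℕ → D) (φ : Polynomial D) {M N : ℕ} (h : M ≤ N) (t : ℕ) :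
    Asum s (X ^ M * φ) N t = Asum s φ (N - M) (t + M) := by
  unfold Asum
  have h1 : ∑ j ∈ Finset.Ico 0 M, (X ^ M * φ).coeff j * s (t + j) = 0 := by
    apply Finset.sum_eq_zero; intro j hj
    rw [Finset.mem_Ico] at hj
    rw [Polynomial.coeff_X_pow_mul', if_neg (by omega), zero_mul]
  conv_lhs => rw [Finset.range_eq_Ico, ← Finset.sum_Ico_consecutive _ (Nat.zero_le M) h]
  rw [h1, zero_add, Finset.sum_Ico_eq_sum_range]
  apply Finset.sum_congr rfl
  intro i _
  rw [Polynomial.coeff_X_pow_mul', if_pos (Nat.le_add_right M i)]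
  have e1 : M + i - M = i := by omega
  have e2 : t + (M + i) = t + M + i := by omega
  rw [e1, e2]

lemma disc_eq_Asum {s : ℕ → D} {k : ℕ} {φ : Polynomial D} (h : φ.natDegree ≤ k) :
    disc s k φ = Asum s φ (φ.natDegree + 1) (k - φ.natDegree) := by
  unfold disc Asum
  apply Finset.sum_congr rfl
  intro j _
  rw [if_pos (by omega)]
  have e1 : j + k - φ.natDegree = k - φ.natDegree + j := by omega
  rw [e1]

lemma annCond_mono {s : ℕ → D} {m n : ℕ} {φ : Polynomial D} (h : m ≤ n)
    (ha : AnnCond n s φ) : AnnCond m s φ := fun t ht => ha t (ht.trans h)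

lemma annCond_succ {s : ℕ → D} {k : ℕ} {φ : Polynomial D} (h : AnnCond k s φ)
    (hd : φ.natDegree ≤ k) (hΔ : disc s k φ = 0) : AnnCond (k + 1) s φ := by
  rw [annCond_iff_asum] at h ⊢
  intro t ht
  by_cases ht' : t + φ.natDegree + 1 ≤ k
  · exact h t ht'
  · have e1 : t = k - φ.natDegree := by omega
    rw [e1, ← disc_eq_Asum hd, hΔ]

lemma disc_one (s : ℕ → D) (k : ℕ) : disc s k (1 : Polynomial D) = s k := by
  unfold disc
  simp

end BMAux
section BMAux2
open Polynomial Finset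
variable {D : Type*} [CommRing D]

/-- sequence-numerator sum with explicit range -/
def Ssum (s : ℕ → D) (n : ℕ) (φ : Polynomial D) (N k : ℕ) : D :=
  ∑ j ∈ Finset.range N,
    if k + 1 ≤ j ∧ j - (k + 1) < n then φ.coeff j * s (j - (k + 1)) else 0

lemma Ssum_ext (s : ℕ → D) (n : ℕ) (φ : Polynomial D) {N N' : ℕ} (k : ℕ)
    (h : φ.natDegree < N) (h' : N ≤ N') : Ssum s n φ N' k = Ssum s n φ N k := by
  unfold Ssum
  refine (Finset.sum_subset (Finset.range_subset_range.2 h') ?_).symm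
  intro j _ hj
  rw [Finset.mem_range, not_lt] at hj
  rw [φ.coeff_eq_zero_of_natDegree_lt (lt_of_lt_of_le h hj)]
  split_ifs <;> simp

lemma seqNum_iff_ssum {n : ℕ} {s : ℕ → D} {φ ψ : Polynomial D} {N : ℕ} (h : φ.natDegree < N) :
    SeqNum n s φ ψ ↔ ∀ k, ψ.coeff k = Ssum s n φ N k := by
  have e : ∀ k, Ssum s n φ N k = Ssum s n φ (φ.natDegree + 1) k :=
    fun k => Ssum_ext s n φ k (Nat.lt_succ_self _) h
  constructor
  · intro H k; rw [e k]; exact H k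
  · intro H k; show ψ.coeff k = Ssum s n φ (φ.natDegree + 1) k; rw [← e k]; exact H k

lemma Ssum_sub (s : ℕ → D) (n : ℕ) (φ φ' : Polynomial D) (N k : ℕ) :
    Ssum s n (φ - φ') N k = Ssum s n φ N k - Ssum s n φ' N k := by
  unfold Ssum
  rw [← Finset.sum_sub_distrib]
  refine Finset.sum_congr rfl fun j _ => ?_
  rw [coeff_sub]
  split_ifs <;> ring

lemma Ssum_C_mul (s : ℕ → D) (n : ℕ) (a : D) (φ : Polynomial D) (N k : ℕ) :
    Ssum s n (C a * φ) N k = a * Ssum s n φ N k := by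
  unfold Ssum
  rw [Finset.mul_sum]
  refine Finset.sum_congr rfl fun j _ => ?_
  rw [coeff_C_mul]
  split_ifs <;> ring

lemma seqNum_sub {n : ℕ} {s : ℕ → D} {φ φ' ψ ψ' : Polynomial D}
    (h : SeqNum n s φ ψ) (h' : SeqNum n s φ' ψ') : SeqNum n s (φ - φ') (ψ - ψ') := by
  set N := max (max φ.natDegree φ'.natDegree) (φ - φ').natDegree + 1 with hN
  rw [seqNum_iff_ssum (show (φ - φ').natDegree < N by omega)]
  intro k
  rw [coeff_sub, Ssum_sub,
    ← (seqNum_iff_ssum (show φ.natDegree < N by omega)).1 h k,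
    ← (seqNum_iff_ssum (show φ'.natDegree < N by omega)).1 h' k]

lemma seqNum_C_mul {n : ℕ} {s : ℕ → D} {a : D} {φ ψ : Polynomial D}
    (h : SeqNum n s φ ψ) : SeqNum n s (C a * φ) (C a * ψ) := by
  rw [seqNum_iff_ssum (show (C a * φ).natDegree < φ.natDegree + 1 from
    Nat.lt_succ_of_le (natDegree_C_mul_le a φ))]
  intro k
  rw [coeff_C_mul, Ssum_C_mul]
  congr 1
  exact h k

lemma seqNum_congr {n n' : ℕ} {s : ℕ → D} {φ ψ : Polynomial D}
    (hn : φ.natDegree ≤ n) (hn' : φ.natDegree ≤ n') (h : SeqNum n s φ ψ) :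
    SeqNum n' s φ ψ := by
  intro k
  rw [h k]
  refine Finset.sum_congr rfl fun j hj => ?_
  rw [Finset.mem_range] at hj
  by_cases hc : k + 1 ≤ j
  · rw [if_pos ⟨hc, by omega⟩, if_pos ⟨hc, by omega⟩]
  · rw [if_neg (fun hh => hc hh.1), if_neg (fun hh => hc hh.1)]

lemma seqNum_X_pow_mul {n m' M : ℕ} {s : ℕ → D} {φ ψ : Polynomial D}
    (hφ : φ ≠ 0) (hsn : SeqNum n s φ ψ) (hann : AnnCond m' s φ)
    (h1 : M + φ.natDegree ≤ m') (h2 : M + φ.natDegree ≤ n) :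
    SeqNum n s (X ^ M * φ) (X ^ M * ψ) := by
  have hdeg : (X ^ M * φ).natDegree = M + φ.natDegree := by
    haveI : Nontrivial D := by
      by_contra hcon
      rw [not_nontrivial_iff_subsingleton] at hcon
      exact hφ (Subsingleton.elim _ _)
    rw [natDegree_mul' (by rw [leadingCoeff_X_pow, one_mul]; exact leadingCoeff_ne_zero.mpr hφ),
      natDegree_X_pow]
  rw [seqNum_iff_ssum (show (X ^ M * φ).natDegree < M + φ.natDegree + 1 by omega)]
  intro k
  have hsplit : Ssum s n (X ^ M * φ) (M + φ.natDegree + 1) k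
      = ∑ i ∈ Finset.range (φ.natDegree + 1),
        if k + 1 ≤ M + i ∧ M + i - (k + 1) < n then φ.coeff i * s (M + i - (k + 1)) else 0 := by
    unfold Ssum
    have hz : ∑ j ∈ Finset.Ico 0 M,
        (if k + 1 ≤ j ∧ j - (k + 1) < n then (X ^ M * φ).coeff j * s (j - (k + 1)) else 0) = 0 := by
      apply Finset.sum_eq_zero; intro j hj
      rw [Finset.mem_Ico] at hj
      split_ifs
      · rw [Polynomial.coeff_X_pow_mul', if_neg (by omega), zero_mul]
      · rfl
    conv_lhs => rw [Finset.range_eq_Ico,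
      ← Finset.sum_Ico_consecutive _ (Nat.zero_le M) (by omega : M ≤ M + φ.natDegree + 1)]
    rw [hz, zero_add, Finset.sum_Ico_eq_sum_range]
    have e1 : M + φ.natDegree + 1 - M = φ.natDegree + 1 := by omega
    rw [e1]
    refine Finset.sum_congr rfl fun i _ => ?_
    rw [Polynomial.coeff_X_pow_mul', if_pos (Nat.le_add_right M i)]
    have e2 : M + i - M = i := by omega
    rw [e2]
  rw [hsplit, Polynomial.coeff_X_pow_mul']
  by_cases hk : M ≤ k
  · rw [if_pos hk]
    rw [(seqNum_iff_ssum (Nat.lt_succ_self φ.natDegree)).1 hsn (k - M)]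
    unfold Ssum
    refine Finset.sum_congr rfl fun i hi => ?_
    rw [Finset.mem_range] at hi
    by_cases hc : k - M + 1 ≤ i
    · have e3 : M + i - (k + 1) = i - (k - M + 1) := by omega
      rw [e3]
      refine if_congr (and_congr_left' (by constructor <;> intro <;> omega)) rfl rfl
    · rw [if_neg (by rintro ⟨h1, -⟩; omega), if_neg (by rintro ⟨h1, -⟩; omega)]
  · rw [if_neg hk]
    symm
    have : ∀ i ∈ Finset.range (φ.natDegree + 1),
        (if k + 1 ≤ M + i ∧ M + i - (k + 1) < n then φ.coeff i * s (M + i - (k + 1)) else 0)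
        = φ.coeff i * s ((M - (k + 1)) + i) := by
      intro i hi
      rw [Finset.mem_range] at hi
      rw [if_pos ⟨by omega, by omega⟩]
      have e4 : M + i - (k + 1) = (M - (k + 1)) + i := by omega
      rw [e4]
    rw [Finset.sum_congr rfl this]
    exact hann (M - (k + 1)) (by omega)

end BMAux2
section BMAux3
open Polynomial Finset
variable {D : Type*} [CommRing D]

/-- the sequence polynomial `Ŝ = ∑_{i<n} s_i x^{n-1-i}` -/
noncomputable def Shat (n : ℕ) (s : ℕ → D) : Polynomial D :=
  ∑ i ∈ Finset.range n, C (s i) * X ^ (n - 1 - i)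

lemma coeff_Shat {n : ℕ} {s : ℕ → D} {c : ℕ} :
    (Shat n s).coeff c = if c < n then s (n - 1 - c) else 0 := by
  unfold Shat
  rw [finset_sum_coeff]
  simp_rw [coeff_C_mul, coeff_X_pow]
  by_cases h : c < n
  · rw [if_pos h, Finset.sum_eq_single (n - 1 - c)]
    · rw [if_pos (by omega), mul_one]
    · intro i hi hne
      rw [Finset.mem_range] at hi
      rw [if_neg (by omega), mul_zero]
    · intro h'
      exact absurd (Finset.mem_range.2 (by omega)) h'
  · rw [if_neg h]
    apply Finset.sum_eq_zero
    intro i hi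
    rw [Finset.mem_range] at hi
    rw [if_neg (by omega), mul_zero]

lemma coeff_mul_Shat (φ : Polynomial D) (n : ℕ) (s : ℕ → D) (m : ℕ) :
    (φ * Shat n s).coeff m = ∑ j ∈ Finset.range (φ.natDegree + 1),
      if j ≤ m ∧ m < n + j then φ.coeff j * s (n - 1 - (m - j)) else 0 := by
  rw [coeff_mul, Finset.Nat.sum_antidiagonal_eq_sum_range_succ_mk]
  have e1 : ∀ p ∈ Finset.range (m + 1), φ.coeff p * (Shat n s).coeff (m - p)
      = if p ≤ m ∧ m < n + p then φ.coeff p * s (n - 1 - (m - p)) else 0 := by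
    intro p hp
    rw [Finset.mem_range] at hp
    rw [coeff_Shat]
    by_cases h : m - p < n
    · rw [if_pos h, if_pos ⟨by omega, by omega⟩]
    · rw [if_neg h, if_neg (by rintro ⟨-, hh⟩; omega), mul_zero]
  rw [Finset.sum_congr rfl e1]
  have e2 : ∀ N', m + 1 ≤ N' →
      (∑ p ∈ Finset.range (m + 1),
        if p ≤ m ∧ m < n + p then φ.coeff p * s (n - 1 - (m - p)) else 0)
      = ∑ p ∈ Finset.range N',
        if p ≤ m ∧ m < n + p then φ.coeff p * s (n - 1 - (m - p)) else 0 := by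
    intro N' hN'
    refine Finset.sum_subset (Finset.range_subset_range.2 hN') ?_
    intro j _ hj
    rw [Finset.mem_range, not_lt] at hj
    rw [if_neg (by rintro ⟨hh, -⟩; omega)]
  have e3 : ∀ N', φ.natDegree + 1 ≤ N' →
      (∑ p ∈ Finset.range (φ.natDegree + 1),
        if p ≤ m ∧ m < n + p then φ.coeff p * s (n - 1 - (m - p)) else 0)
      = ∑ p ∈ Finset.range N',
        if p ≤ m ∧ m < n + p then φ.coeff p * s (n - 1 - (m - p)) else 0 := by
    intro N' hN'
    refine Finset.sum_subset (Finset.range_subset_range.2 hN') ?_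
    intro j _ hj
    rw [Finset.mem_range, not_lt] at hj
    rw [φ.coeff_eq_zero_of_natDegree_lt (by omega)]
    split_ifs <;> simp
  rw [e2 (m + φ.natDegree + 2) (by omega), e3 (m + φ.natDegree + 2) (by omega)]

lemma annCond_coeff_mul_Shat {n : ℕ} {s : ℕ → D} {φ : Polynomial D} {c : ℕ}
    (h : AnnCond n s φ) (h1 : φ.natDegree ≤ c) (h2 : c < n) :
    (φ * Shat n s).coeff c = 0 := by
  rw [coeff_mul_Shat]
  have e1 : ∀ j ∈ Finset.range (φ.natDegree + 1),
      (if j ≤ c ∧ c < n + j then φ.coeff j * s (n - 1 - (c - j)) else 0)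
      = φ.coeff j * s ((n - 1 - c) + j) := by
    intro j hj
    rw [Finset.mem_range] at hj
    rw [if_pos ⟨by omega, by omega⟩]
    have e : n - 1 - (c - j) = (n - 1 - c) + j := by omega
    rw [e]
  rw [Finset.sum_congr rfl e1]
  exact h (n - 1 - c) (by omega)

lemma seqNum_coeff_mul_Shat {n : ℕ} {s : ℕ → D} {φ ψ : Polynomial D}
    (hs : SeqNum n s φ ψ) (hd : φ.natDegree ≤ n) (k : ℕ) :
    (φ * Shat n s).coeff (n + k) = ψ.coeff k := by
  rw [coeff_mul_Shat, hs k]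
  refine Finset.sum_congr rfl fun j hj => ?_
  rw [Finset.mem_range] at hj
  by_cases hc : k + 1 ≤ j
  · have e : n - 1 - (n + k - j) = j - (k + 1) := by omega
    rw [if_pos ⟨by omega, by omega⟩, if_pos ⟨hc, by omega⟩, e]
  · rw [if_neg (by rintro ⟨-, hh⟩; omega), if_neg (by rintro ⟨hh, -⟩; omega)]

lemma cross_eq {n : ℕ} {s : ℕ → D} {f g f₂ g₂ : Polynomial D}
    (hf : AnnCond n s f) (hf2 : SeqNum n s f f₂) (hg : AnnCond n s g)
    (hg2 : SeqNum n s g g₂) (hdeg : f.natDegree + g.natDegree ≤ n) :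
    f * g₂ = g * f₂ := by
  have key : ∀ (p q q₂ : Polynomial D), AnnCond n s q → SeqNum n s q q₂ →
      p.natDegree + q.natDegree ≤ n → ∀ c : ℕ,
      (p * (q * Shat n s)).coeff (n + c) = (p * q₂).coeff c := by
    intro p q q₂ hq hq2 hd c
    rw [coeff_mul p (q * Shat n s), Finset.Nat.sum_antidiagonal_eq_sum_range_succ_mk,
      coeff_mul p q₂, Finset.Nat.sum_antidiagonal_eq_sum_range_succ_mk]
    have hsub : ∑ i ∈ Finset.range (n + c + 1), p.coeff i * (q * Shat n s).coeff (n + c - i)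
        = ∑ i ∈ Finset.range (c + 1), p.coeff i * (q * Shat n s).coeff (n + c - i) := by
      symm
      refine Finset.sum_subset (Finset.range_subset_range.2 (by omega)) ?_
      intro i hi hi'
      rw [Finset.mem_range, not_lt] at hi'
      rw [Finset.mem_range] at hi
      by_cases hp : p.natDegree < i
      · rw [p.coeff_eq_zero_of_natDegree_lt hp, zero_mul]
      · rw [not_lt] at hp
        rw [annCond_coeff_mul_Shat hq (by omega) (by omega), mul_zero]
    rw [hsub]
    refine Finset.sum_congr rfl fun i hi => ?_
    rw [Finset.mem_range] at hi
    have e : n + c - i = n + (c - i) := by omega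
    rw [e, seqNum_coeff_mul_Shat hq2 (by omega) (c - i)]
  ext c
  have h1 := key f g g₂ hg hg2 hdeg c
  have h2 := key g f f₂ hf hf2 (by omega) c
  have e : f * (g * Shat n s) = g * (f * Shat n s) := by ring
  rw [← h1, ← h2, e]

/-- the numerator polynomial of an annihilator -/
noncomputable def seqNumPoly (n : ℕ) (s : ℕ → D) (φ : Polynomial D) : Polynomial D :=
  ∑ k ∈ Finset.range φ.natDegree, C (∑ j ∈ Finset.range (φ.natDegree + 1),
    if k + 1 ≤ j ∧ j - (k + 1) < n then φ.coeff j * s (j - (k + 1)) else 0) * X ^ k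

lemma seqNum_seqNumPoly (n : ℕ) (s : ℕ → D) (φ : Polynomial D) :
    SeqNum n s φ (seqNumPoly n s φ) := by
  intro k
  unfold seqNumPoly
  rw [finset_sum_coeff]
  simp_rw [coeff_C_mul, coeff_X_pow, mul_ite, mul_one, mul_zero]
  rw [Finset.sum_ite_eq (Finset.range φ.natDegree) k]
  by_cases h : k < φ.natDegree
  · rw [if_pos (Finset.mem_range.2 h)]
  · rw [if_neg (fun hh => h (Finset.mem_range.1 hh))]
    symm
    apply Finset.sum_eq_zero
    intro j hj
    rw [Finset.mem_range] at hj
    rw [if_neg (by rintro ⟨hh, -⟩; omega)]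

end BMAux3
section BMInv
open Polynomial Finset
variable {D : Type*} [CommRing D] [IsDomain D] [DecidableEq D]

lemma bmStep_zero {s : ℕ → D} {k : ℕ} {st : BMState D} (h : disc s k st.mu.1 = 0) :
    bmStep s k st = { st with e := st.e + 1 } := by
  simp only [bmStep]
  rw [if_pos h]

lemma bmStep_low {s : ℕ → D} {k : ℕ} {st : BMState D} (h : disc s k st.mu.1 ≠ 0)
    (he : st.e ≤ 0) :
    bmStep s k st = { st with
      mu := (C st.dp * st.mu.1 - C (disc s k st.mu.1) * X ^ (-st.e).toNat * st.mu'.1,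
             C st.dp * st.mu.2 - C (disc s k st.mu.1) * X ^ (-st.e).toNat * st.mu'.2),
      nabla := st.dp * st.nabla,
      e := st.e + 1 } := by
  simp only [bmStep]
  rw [if_neg h, if_pos he]

lemma bmStep_jump {s : ℕ → D} {k : ℕ} {st : BMState D} (h : disc s k st.mu.1 ≠ 0)
    (he : ¬ st.e ≤ 0) :
    bmStep s k st =
      { mu := (C st.dp * X ^ st.e.toNat * st.mu.1 - C (disc s k st.mu.1) * st.mu'.1,
               C st.dp * X ^ st.e.toNat * st.mu.2 - C (disc s k st.mu.1) * st.mu'.2),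
        mu' := st.mu,
        dp := disc s k st.mu.1,
        e := -st.e + 1,
        nabla := disc s k st.mu.1 * st.nabla } := by
  simp only [bmStep]
  rw [if_neg h, if_neg he]

/-- the main invariant on a nondegenerate state -/
def GoodSt (s : ℕ → D) (k : ℕ) (st : BMState D) : Prop :=
  st.mu.1 ≠ 0 ∧ st.mu'.1 ≠ 0 ∧ 1 ≤ st.mu.1.natDegree ∧ st.mu.1.natDegree ≤ k ∧
  AnnCond k s st.mu.1 ∧ SeqNum k s st.mu.1 st.mu.2 ∧
  st.dp ≠ 0 ∧ st.e = (k : ℤ) + 1 - 2 * st.mu.1.natDegree ∧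
  ∃ m : ℕ, m < k ∧ st.mu.1.natDegree + st.mu'.1.natDegree = m + 1 ∧
    AnnCond m s st.mu'.1 ∧ SeqNum m s st.mu'.1 st.mu'.2 ∧ disc s m st.mu'.1 = st.dp

lemma goodSt_intro {s : ℕ → D} {k : ℕ} (μ1 μ2 ν1 ν2 : Polynomial D) (d : D) (ee : ℤ)
    (nb : D) (m : ℕ)
    (h1 : μ1 ≠ 0) (h2 : ν1 ≠ 0) (h3 : 1 ≤ μ1.natDegree) (h4 : μ1.natDegree ≤ k)
    (h5 : AnnCond k s μ1) (h6 : SeqNum k s μ1 μ2)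
    (h7 : d ≠ 0) (h8 : ee = (k : ℤ) + 1 - 2 * μ1.natDegree)
    (h9 : m < k) (h10 : μ1.natDegree + ν1.natDegree = m + 1)
    (h11 : AnnCond m s ν1) (h12 : SeqNum m s ν1 ν2)
    (h13 : disc s m ν1 = d) : GoodSt s k ⟨(μ1, μ2), (ν1, ν2), d, ee, nb⟩ :=
  ⟨h1, h2, h3, h4, h5, h6, h7, h8, m, h9, h10, h11, h12, h13⟩

def BMInvariant (s : ℕ → D) (k : ℕ) : Prop :=
  (bmRun s k = ⟨(1, 0), (0, -1), 1, (k : ℤ) + 1, 1⟩ ∧ ∀ i < k, s i = 0)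
    ∨ GoodSt s k (bmRun s k)

lemma sub_deg {p q : Polynomial D} (hp : p ≠ 0) (hq : q.natDegree < p.natDegree) :
    p - q ≠ 0 ∧ (p - q).natDegree = p.natDegree := by
  constructor
  · intro h
    rw [sub_eq_zero] at h
    rw [h] at hq
    exact lt_irrefl _ hq
  · exact natDegree_sub_eq_left_of_natDegree_lt hq

lemma bmInv_zero (s : ℕ → D) : BMInvariant s 0 := by
  left
  constructor
  · show (⟨(1, 0), (0, -1), 1, 1, 1⟩ : BMState D) = _
    norm_num
  · intro i hi
    exact absurd hi (Nat.not_lt_zero i)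

lemma bmInv_succ (s : ℕ → D) (k : ℕ) (h : BMInvariant s k) : BMInvariant s (k + 1) := by
  rcases h with ⟨hst, hz⟩ | hG
  · -- initial segment so far
    have hmu1 : (bmRun s k).mu.1 = 1 := congrArg (fun t => t.mu.1) hst
    have hdisc : disc s k (bmRun s k).mu.1 = s k := by rw [hmu1]; exact disc_one s k
    have he' : (bmRun s k).e = (k : ℤ) + 1 := congrArg BMState.e hst
    by_cases hsk : s k = 0
    · left
      constructor
      · have hnew0 : bmRun s (k + 1) = ⟨(1, 0), (0, -1), 1, ((k : ℤ) + 1) + 1, 1⟩ := by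
          show bmStep s k (bmRun s k) = _
          rw [bmStep_zero (by rw [hdisc]; exact hsk), hst]
        rw [show (((k : ℤ) + 1) + 1) = ((k + 1 : ℕ) : ℤ) + 1 by push_cast; ring] at hnew0
        exact hnew0
      · intro i hi
        rcases Nat.lt_succ_iff_lt_or_eq.1 hi with h' | h'
        · exact hz i h'
        · rw [h']; exact hsk
    · right
      have h1 : disc s k (bmRun s k).mu.1 ≠ 0 := by rw [hdisc]; exact hsk
      have h2 : ¬ (bmRun s k).e ≤ 0 := by rw [he']; omega
      have hT : ((bmRun s k).e).toNat = k + 1 := by rw [he']; omega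
      have hnew : bmRun s (k + 1) =
          ⟨(C (1 : D) * X ^ (k + 1) * 1 - C (s k) * 0, C (1 : D) * X ^ (k + 1) * 0 - C (s k) * (-1)),
            (1, 0), s k, -((k : ℤ) + 1) + 1, s k * 1⟩ := by
        show bmStep s k (bmRun s k) = _
        rw [bmStep_jump h1 h2, hdisc, hT, he', hst]
      rw [show C (1 : D) * X ^ (k + 1) * 1 - C (s k) * 0 = X ^ (k + 1) by simp,
        show C (1 : D) * X ^ (k + 1) * 0 - C (s k) * (-1) = C (s k) by simp,
        show (-((k : ℤ) + 1) + 1) = -(k : ℤ) by ring, mul_one] at hnew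
      rw [show GoodSt s (k+1) (bmRun s (k+1)) = GoodSt s (k+1)
          (⟨(X ^ (k + 1), C (s k)), (1, 0), s k, -(k : ℤ), s k⟩ : BMState D) from
        congrArg _ hnew]
      have hdX : (X ^ (k + 1) : Polynomial D).natDegree = k + 1 := natDegree_X_pow _
      refine goodSt_intro _ _ _ _ _ _ _ k ?_ ?_ ?_ ?_ ?_ ?_ ?_ ?_ ?_ ?_ ?_ ?_ ?_
      · show (X ^ (k + 1) : Polynomial D) ≠ 0
        exact (monic_X_pow _).ne_zero
      · show (1 : Polynomial D) ≠ 0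
        exact one_ne_zero
      · show 1 ≤ (X ^ (k + 1) : Polynomial D).natDegree
        omega
      · show (X ^ (k + 1) : Polynomial D).natDegree ≤ k + 1
        omega
      · show AnnCond (k + 1) s (X ^ (k + 1))
        intro t ht
        rw [hdX] at ht
        omega
      · show SeqNum (k + 1) s (X ^ (k + 1)) (C (s k))
        intro k'
        rw [hdX, coeff_C]
        rw [Finset.sum_eq_single (k + 1)
          (fun j _ hne => by
            rw [coeff_X_pow, if_neg hne]
            split_ifs
            · rw [zero_mul]
            · rfl)
          (fun hmem => absurd (Finset.mem_range.2 (by omega)) hmem)]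
        rw [coeff_X_pow]
        by_cases h4 : k' + 1 ≤ k + 1
        · conv_rhs => rw [if_pos (⟨h4, by omega⟩ : k' + 1 ≤ k + 1 ∧ k + 1 - (k' + 1) < k + 1),
            if_pos rfl]
          rw [one_mul]
          by_cases h5 : k' = 0
          · subst h5
            rw [if_pos rfl]
            norm_num
          · rw [if_neg h5]
            symm
            exact hz _ (by omega)
        · conv_rhs => rw [if_neg
            (show ¬(k' + 1 ≤ k + 1 ∧ k + 1 - (k' + 1) < k + 1) from by rintro ⟨hh, -⟩; omega)]
          rw [if_neg (by omega)]
      · show s k ≠ 0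
        exact hsk
      · show -(k : ℤ) = ((k + 1 : ℕ) : ℤ) + 1 - 2 * (X ^ (k + 1) : Polynomial D).natDegree
        rw [hdX]
        push_cast
        ring
      · omega
      · show (X ^ (k + 1) : Polynomial D).natDegree + (1 : Polynomial D).natDegree = k + 1
        rw [hdX, natDegree_one]
      · show AnnCond k s 1
        intro t ht
        rw [natDegree_one] at ht
        simp only [natDegree_one, zero_add, Finset.range_one, Finset.sum_singleton,
          coeff_one_zero, one_mul, Nat.add_zero]
        exact hz t (by omega)
      · show SeqNum k s 1 0
        intro k'
        rw [coeff_zero, natDegree_one]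
        symm
        apply Finset.sum_eq_zero
        intro j hj
        rw [Finset.mem_range] at hj
        rw [if_neg (by rintro ⟨hh, -⟩; omega)]
      · show disc s k (1 : Polynomial D) = s k
        exact disc_one s k
  · -- GoodSt case
    obtain ⟨hm1, hm1', hL1, hLk, hAnn, hSeq, hdp, he, m, hmk, hdeg', hAnn', hSeq', hdisc'⟩ := hG
    right
    by_cases hΔ : disc s k (bmRun s k).mu.1 = 0
    · show GoodSt s (k + 1) (bmStep s k (bmRun s k))
      rw [bmStep_zero hΔ]
      have he1 : (bmRun s k).e + 1 = ((k + 1 : ℕ) : ℤ) + 1 - 2 * (bmRun s k).mu.1.natDegree := by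
        omega
      have h4' : (bmRun s k).mu.1.natDegree ≤ k + 1 := by omega
      exact goodSt_intro _ _ _ _ _ _ _ m hm1 hm1' hL1 h4' (annCond_succ hAnn hLk hΔ)
        (seqNum_congr hLk h4' hSeq) hdp he1 (Nat.lt_succ_of_lt hmk) hdeg' hAnn' hSeq' hdisc'
    · by_cases he0 : (bmRun s k).e ≤ 0
      · -- no length change
        set E := (-(bmRun s k).e).toNat with hE
        have hEk : (E : ℤ) + (k : ℤ) + 1 = 2 * (bmRun s k).mu.1.natDegree := by omega
        have hE' : E + (bmRun s k).mu'.1.natDegree < (bmRun s k).mu.1.natDegree := by omega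
        have hassoc : C (disc s k (bmRun s k).mu.1) * X ^ E * (bmRun s k).mu'.1
            = C (disc s k (bmRun s k).mu.1) * (X ^ E * (bmRun s k).mu'.1) := mul_assoc _ _ _
        have hXd : (X ^ E * (bmRun s k).mu'.1).natDegree = E + (bmRun s k).mu'.1.natDegree := by
          rw [natDegree_mul ((monic_X_pow E).ne_zero) hm1', natDegree_X_pow]
        have hCd : (C (bmRun s k).dp * (bmRun s k).mu.1).natDegree
            = (bmRun s k).mu.1.natDegree := natDegree_C_mul hdp
        have hC0 : C (bmRun s k).dp * (bmRun s k).mu.1 ≠ 0 :=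
          mul_ne_zero (fun hh => hdp (C_eq_zero.1 hh)) hm1
        have hlt : (C (disc s k (bmRun s k).mu.1) * X ^ E * (bmRun s k).mu'.1).natDegree
            < (C (bmRun s k).dp * (bmRun s k).mu.1).natDegree := by
          rw [hassoc, hCd]
          exact lt_of_le_of_lt (natDegree_C_mul_le _ _) (by omega)
        obtain ⟨hA0, hdegA⟩ := sub_deg hC0 hlt
        rw [hCd] at hdegA
        have hAnnA : AnnCond (k + 1) s (C (bmRun s k).dp * (bmRun s k).mu.1
            - C (disc s k (bmRun s k).mu.1) * X ^ E * (bmRun s k).mu'.1) := by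
          intro t ht
          rw [hdegA] at ht
          show Asum s _ (_ + 1) t = 0
          rw [hdegA, Asum_sub, Asum_C_mul, hassoc, Asum_C_mul,
            Asum_X_pow_mul s _ (by omega : E ≤ (bmRun s k).mu.1.natDegree + 1),
            Asum_ext s _ (t + E) (N := (bmRun s k).mu'.1.natDegree + 1) (by omega)
              (by omega : (bmRun s k).mu'.1.natDegree + 1 ≤ (bmRun s k).mu.1.natDegree + 1 - E)]
          by_cases ht' : t + (bmRun s k).mu.1.natDegree + 1 ≤ k
          · rw [annCond_asum hAnn ht', annCond_asum hAnn' (show (t + E) + (bmRun s k).mu'.1.natDegree + 1 ≤ m by omega)]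
            ring
          · have e2 : t + E = m - (bmRun s k).mu'.1.natDegree := by omega
            have e1 : t = k - (bmRun s k).mu.1.natDegree := by omega
            rw [e2, e1, ← disc_eq_Asum hLk, ← disc_eq_Asum (by omega), hdisc']
            ring
        have hSeqA : SeqNum (k + 1) s
            (C (bmRun s k).dp * (bmRun s k).mu.1
              - C (disc s k (bmRun s k).mu.1) * X ^ E * (bmRun s k).mu'.1)
            (C (bmRun s k).dp * (bmRun s k).mu.2
              - C (disc s k (bmRun s k).mu.1) * X ^ E * (bmRun s k).mu'.2) := by
          have p1 : SeqNum (k + 1) s (C (bmRun s k).dp * (bmRun s k).mu.1)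
              (C (bmRun s k).dp * (bmRun s k).mu.2) :=
            seqNum_C_mul (seqNum_congr hLk (by omega) hSeq)
          have p2 : SeqNum (k + 1) s (X ^ E * (bmRun s k).mu'.1) (X ^ E * (bmRun s k).mu'.2) :=
            seqNum_X_pow_mul hm1' (seqNum_congr (by omega) (by omega) hSeq') hAnn'
              (by omega) (by omega)
          have p3 := seqNum_C_mul (a := disc s k (bmRun s k).mu.1) p2
          have p4 := seqNum_sub p1 p3
          rw [← mul_assoc, ← mul_assoc] at p4
          exact p4
        have he1 : (bmRun s k).e + 1 = ((k + 1 : ℕ) : ℤ) + 1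
            - 2 * ((C (bmRun s k).dp * (bmRun s k).mu.1
              - C (disc s k (bmRun s k).mu.1) * X ^ E * (bmRun s k).mu'.1).natDegree : ℤ) := by
          omega
        have g3 : 1 ≤ (C (bmRun s k).dp * (bmRun s k).mu.1
            - C (disc s k (bmRun s k).mu.1) * X ^ E * (bmRun s k).mu'.1).natDegree := by
          rw [hdegA]; omega
        have g4 : (C (bmRun s k).dp * (bmRun s k).mu.1
            - C (disc s k (bmRun s k).mu.1) * X ^ E * (bmRun s k).mu'.1).natDegree ≤ k + 1 := by
          rw [hdegA]; omega
        have g10 : (C (bmRun s k).dp * (bmRun s k).mu.1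
            - C (disc s k (bmRun s k).mu.1) * X ^ E * (bmRun s k).mu'.1).natDegree
            + (bmRun s k).mu'.1.natDegree = m + 1 := by
          rw [hdegA]; omega
        show GoodSt s (k + 1) (bmStep s k (bmRun s k))
        rw [bmStep_low hΔ he0, ← hE]
        exact goodSt_intro _ _ _ _ _ _ _ m hA0 hm1' g3 g4 hAnnA hSeqA hdp he1
          (Nat.lt_succ_of_lt hmk) g10 hAnn' hSeq' hdisc'
      · -- length change
        set E := ((bmRun s k).e).toNat with hE
        have hEk : (E : ℤ) = (k : ℤ) + 1 - 2 * (bmRun s k).mu.1.natDegree := by omega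
        have hE1 : 1 ≤ E := by omega
        have hL' : (bmRun s k).mu'.1.natDegree < E + (bmRun s k).mu.1.natDegree := by omega
        have hassoc : C (bmRun s k).dp * X ^ E * (bmRun s k).mu.1
            = C (bmRun s k).dp * (X ^ E * (bmRun s k).mu.1) := mul_assoc _ _ _
        have hXd : (X ^ E * (bmRun s k).mu.1).natDegree = E + (bmRun s k).mu.1.natDegree := by
          rw [natDegree_mul ((monic_X_pow E).ne_zero) hm1, natDegree_X_pow]
        have hC0 : C (bmRun s k).dp * X ^ E * (bmRun s k).mu.1 ≠ 0 := by
          rw [hassoc]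
          exact mul_ne_zero (fun hh => hdp (C_eq_zero.1 hh))
            (mul_ne_zero ((monic_X_pow E).ne_zero) hm1)
        have hCd : (C (bmRun s k).dp * X ^ E * (bmRun s k).mu.1).natDegree
            = E + (bmRun s k).mu.1.natDegree := by rw [hassoc, natDegree_C_mul hdp, hXd]
        have hlt : (C (disc s k (bmRun s k).mu.1) * (bmRun s k).mu'.1).natDegree
            < (C (bmRun s k).dp * X ^ E * (bmRun s k).mu.1).natDegree := by
          rw [hCd]
          exact lt_of_le_of_lt (natDegree_C_mul_le _ _) (by omega)
        obtain ⟨hA0, hdegA⟩ := sub_deg hC0 hlt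
        rw [hCd] at hdegA
        have hAnnA : AnnCond (k + 1) s (C (bmRun s k).dp * X ^ E * (bmRun s k).mu.1
            - C (disc s k (bmRun s k).mu.1) * (bmRun s k).mu'.1) := by
          intro t ht
          rw [hdegA] at ht
          show Asum s _ (_ + 1) t = 0
          rw [hdegA, Asum_sub, hassoc, Asum_C_mul, Asum_C_mul,
            Asum_X_pow_mul s _ (by omega : E ≤ E + (bmRun s k).mu.1.natDegree + 1),
            Asum_ext s _ t (N := (bmRun s k).mu'.1.natDegree + 1) (by omega)
              (by omega : (bmRun s k).mu'.1.natDegree + 1 ≤ E + (bmRun s k).mu.1.natDegree + 1)]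
          have e3 : E + (bmRun s k).mu.1.natDegree + 1 - E
              = (bmRun s k).mu.1.natDegree + 1 := by omega
          rw [e3]
          by_cases ht' : t + E + (bmRun s k).mu.1.natDegree + 1 ≤ k
          · rw [annCond_asum hAnn (show (t + E) + (bmRun s k).mu.1.natDegree + 1 ≤ k by omega),
              annCond_asum hAnn' (show t + (bmRun s k).mu'.1.natDegree + 1 ≤ m by omega)]
            ring
          · have e2 : t = m - (bmRun s k).mu'.1.natDegree := by omega
            have e1 : t + E = k - (bmRun s k).mu.1.natDegree := by omega
            rw [e1, e2, ← disc_eq_Asum hLk, ← disc_eq_Asum (by omega), hdisc']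
            ring
        have hSeqA : SeqNum (k + 1) s
            (C (bmRun s k).dp * X ^ E * (bmRun s k).mu.1
              - C (disc s k (bmRun s k).mu.1) * (bmRun s k).mu'.1)
            (C (bmRun s k).dp * X ^ E * (bmRun s k).mu.2
              - C (disc s k (bmRun s k).mu.1) * (bmRun s k).mu'.2) := by
          have p1 : SeqNum (k + 1) s (X ^ E * (bmRun s k).mu.1) (X ^ E * (bmRun s k).mu.2) :=
            seqNum_X_pow_mul hm1 (seqNum_congr hLk (by omega) hSeq) hAnn
              (by omega) (by omega)
          have p1' := seqNum_C_mul (a := (bmRun s k).dp) p1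
          have p2 : SeqNum (k + 1) s (bmRun s k).mu'.1 (bmRun s k).mu'.2 :=
            seqNum_congr (by omega) (by omega) hSeq'
          have p2' := seqNum_C_mul (a := disc s k (bmRun s k).mu.1) p2
          have p4 := seqNum_sub p1' p2'
          rw [← mul_assoc, ← mul_assoc] at p4
          exact p4
        have he1 : -(bmRun s k).e + 1 = ((k + 1 : ℕ) : ℤ) + 1
            - 2 * ((C (bmRun s k).dp * X ^ E * (bmRun s k).mu.1
              - C (disc s k (bmRun s k).mu.1) * (bmRun s k).mu'.1).natDegree : ℤ) := by
          omega
        have g3 : 1 ≤ (C (bmRun s k).dp * X ^ E * (bmRun s k).mu.1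
            - C (disc s k (bmRun s k).mu.1) * (bmRun s k).mu'.1).natDegree := by
          rw [hdegA]; omega
        have g4 : (C (bmRun s k).dp * X ^ E * (bmRun s k).mu.1
            - C (disc s k (bmRun s k).mu.1) * (bmRun s k).mu'.1).natDegree ≤ k + 1 := by
          rw [hdegA]; omega
        have g10 : (C (bmRun s k).dp * X ^ E * (bmRun s k).mu.1
            - C (disc s k (bmRun s k).mu.1) * (bmRun s k).mu'.1).natDegree
            + (bmRun s k).mu.1.natDegree = k + 1 := by
          rw [hdegA]; omega
        show GoodSt s (k + 1) (bmStep s k (bmRun s k))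
        rw [bmStep_jump hΔ he0, ← hE]
        exact goodSt_intro _ _ _ _ _ _ _ k hA0 hm1 g3 g4 hAnnA hSeqA hΔ he1
          (Nat.lt_succ_self k) g10 hAnn hSeq rfl

lemma bmInv_all (s : ℕ → D) (k : ℕ) : BMInvariant s k := by
  induction k with
  | zero => exact bmInv_zero s
  | succ k ih => exact bmInv_succ s k ih

end BMInv
open Polynomial in
/-- Non-vanishing annihilators: if `μ₁(a) = 0` then the least degree of an annihilating
polynomial of `s` not vanishing at `a` is `L + M` where `M = max{n+1−2L, 0}`; the
polynomial `ξ₁ = x^M μ₁ − μ'₁` attains it, `ξ₁(a) ≠ 0`, and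
`(ξ₁, x^M μ₂ − μ'₂)` is a solution for `s`. -/
theorem nonvanishing_annihilator {D : Type*} [CommRing D] [IsDomain D] [DecidableEq D]
    (n : ℕ) (hn : 1 ≤ n) (s : ℕ → D) (hnt : ∃ k < n, s k ≠ 0) (a : D)
    (hL : (bmRun s n).mu.1.natDegree = LC n s)
    (hB : (bmRun s n).mu.2 * (bmRun s n).mu'.1 -
        (bmRun s n).mu.1 * (bmRun s n).mu'.2 = C (bmRun s n).nabla)
    (h0 : (bmRun s n).nabla ≠ 0)
    (hmin : IsSolution n s (bmRun s n).mu.1 (bmRun s n).mu.2)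
    (ha : (bmRun s n).mu.1.eval a = 0) :
    let L := LC n s
    let M := ((n : ℤ) + 1 - 2 * L).toNat
    let ξ₁ := X ^ M * (bmRun s n).mu.1 - (bmRun s n).mu'.1
    Annihilates n s ξ₁ ∧ ξ₁.eval a ≠ 0 ∧ ξ₁.natDegree = L + M ∧
      (∀ f₁ : Polynomial D, Annihilates n s f₁ → f₁.eval a ≠ 0 →
        L + M ≤ f₁.natDegree) ∧
      IsSolution n s ξ₁ (X ^ M * (bmRun s n).mu.2 - (bmRun s n).mu'.2) := by
  intro L M ξ₁
  have hLdef : L = LC n s := rfl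
  have hMdef : M = ((n : ℤ) + 1 - 2 * (L : ℤ)).toNat := rfl
  rcases bmInv_all s n with ⟨hst, -⟩ | hG
  · exfalso
    have h1 : (bmRun s n).mu.1 = 1 := congrArg (fun t => t.mu.1) hst
    rw [h1, eval_one] at ha
    exact one_ne_zero ha
  obtain ⟨hm1, hm1', hL1, hLk, hAnn, hSeq, hdp, he, m, hmk, hdeg', hAnn', hSeq', hdisc'⟩ := hG
  have hLL : (bmRun s n).mu.1.natDegree = L := hL
  have hMeq : M = ((n : ℤ) + 1 - 2 * ((bmRun s n).mu.1.natDegree : ℤ)).toNat := by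
    rw [hMdef, hLL]
  -- degree facts
  have hdegXM : (X ^ M * (bmRun s n).mu.1).natDegree = M + (bmRun s n).mu.1.natDegree := by
    rw [natDegree_mul ((monic_X_pow M).ne_zero) hm1, natDegree_X_pow]
  have hXM0 : X ^ M * (bmRun s n).mu.1 ≠ 0 :=
    mul_ne_zero ((monic_X_pow M).ne_zero) hm1
  obtain ⟨hξ0, hdegξ⟩ := sub_deg hXM0
    (show (bmRun s n).mu'.1.natDegree < (X ^ M * (bmRun s n).mu.1).natDegree by
      rw [hdegXM]; omega)
  rw [hdegXM] at hdegξ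
  -- evaluation facts
  have hB' : eval a (bmRun s n).mu.2 * eval a (bmRun s n).mu'.1 = (bmRun s n).nabla := by
    have hh := congrArg (eval a) hB
    rwa [eval_sub, eval_mul, eval_mul, ha, zero_mul, sub_zero, eval_C] at hh
  have hmu'a : eval a (bmRun s n).mu'.1 ≠ 0 := fun hzz => h0 (by rw [← hB', hzz, mul_zero])
  -- annihilation of ξ₁
  have hAnnξ : AnnCond n s (X ^ M * (bmRun s n).mu.1 - (bmRun s n).mu'.1) := by
    intro t ht
    rw [hdegξ] at ht
    show Asum s _ (_ + 1) t = 0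
    rw [hdegξ, Asum_sub,
      Asum_X_pow_mul s _ (by omega : M ≤ M + (bmRun s n).mu.1.natDegree + 1),
      show M + (bmRun s n).mu.1.natDegree + 1 - M = (bmRun s n).mu.1.natDegree + 1 by omega,
      Asum_ext s _ t (N := (bmRun s n).mu'.1.natDegree + 1) (by omega) (by omega),
      annCond_asum hAnn (show (t + M) + (bmRun s n).mu.1.natDegree + 1 ≤ n by omega),
      annCond_asum hAnn' (show t + (bmRun s n).mu'.1.natDegree + 1 ≤ m by omega)]
    ring
  refine ⟨⟨hξ0, hAnnξ⟩, ?_, ?_, ?_, ⟨hξ0, hAnnξ⟩, ?_⟩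
  · -- nonvanishing at a
    show eval a (X ^ M * (bmRun s n).mu.1 - (bmRun s n).mu'.1) ≠ 0
    rw [eval_sub, eval_mul, ha, mul_zero, zero_sub]
    exact neg_ne_zero.2 hmu'a
  · -- degree
    show (X ^ M * (bmRun s n).mu.1 - (bmRun s n).mu'.1).natDegree = L + M
    rw [hdegξ]
    omega
  · -- minimality
    intro f hf hfa
    by_contra hcon
    push_neg at hcon
    rcases Nat.lt_or_ge M 1 with hM0 | hM1
    · have hle : LC n s ≤ f.natDegree := Nat.sInf_le ⟨f, hf, rfl⟩
      omega
    · have hdf : f.natDegree + (bmRun s n).mu.1.natDegree ≤ n := by omega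
      have hcross := cross_eq hf.2 (seqNum_seqNumPoly n s f) hAnn hSeq hdf
      have hkey : C (bmRun s n).nabla * f = (bmRun s n).mu.1 *
          ((bmRun s n).mu'.1 * seqNumPoly n s f - (bmRun s n).mu'.2 * f) := by
        rw [← hB]
        linear_combination (bmRun s n).mu'.1 * hcross
      have heval := congrArg (eval a) hkey
      rw [eval_mul, eval_mul, eval_C, ha, zero_mul] at heval
      exact hfa ((mul_eq_zero.mp heval).resolve_left h0)
  · -- solution numerator
    show SeqNum n s (X ^ M * (bmRun s n).mu.1 - (bmRun s n).mu'.1)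
      (X ^ M * (bmRun s n).mu.2 - (bmRun s n).mu'.2)
    exact seqNum_sub
      (seqNum_X_pow_mul hm1 hSeq hAnn (by omega) (by omega))
      (seqNum_congr (by omega) (by omega) hSeq')
end
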